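/- arXiv:1309.6731 — 3 statements merged into one kernel-verified Lean document; each statement's English description precedes it below -/
import Mathlib

section
/- Let V be an n-dimensional vector space over GF(q) with n ≥ 2, let U be an (n−2)-dimensional subspace of V, and let u, v be two distinct 1-dimensional subspaces of V with u ≰ U and v ≰ U. Then the family of all (n−1)-dimensional subspaces of V containing U fails to separate u and v if and only if U ∩ ⟨u, v⟩ is a 1-dimensional subspace different from both u and v. -/
/-!
Put `S = ⟨u, v⟩`, a plane, and `L = U ⊓ S`, which is a proper subspace of `S` because `u ≰ U`.
If `L` is a line, it differs from `u` and `v` (neither lies in `U`), so `L ⊔ u = L ⊔ v = S`: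
a hyperplane through `U` containing one of `u, v` contains `S`, hence both.
If `L = ⊥`, the hyperplane `U ⊔ u` contains `u` but not `v`, since otherwise it would contain
`U ⊔ S`, whose dimension is `dim U + 2`.
-/

open Module Submodule

namespace Submodule

variable {K V : Type*} [DivisionRing K] [AddCommGroup V] [Module K V] {U u v : Submodule K V}

theorem inf_eq_bot_of_finrank_eq_one {x y : Submodule K V} (hx : finrank K x = 1)
    (hy : finrank K y = 1) (hxy : x ≠ y) : x ⊓ y = ⊥ :=
  ((isAtom_iff_finrank_eq_one.mpr hx).disjoint_of_ne (isAtom_iff_finrank_eq_one.mpr hy) hxy).eq_bot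

theorem finrank_sup_eq_two_of_finrank_eq_one {x y : Submodule K V} (hx : finrank K x = 1)
    (hy : finrank K y = 1) (hxy : x ≠ y) : finrank K ↥(x ⊔ y) = 2 := by
  have := FiniteDimensional.of_finrank_eq_succ hx
  have := FiniteDimensional.of_finrank_eq_succ hy
  have := finrank_sup_add_finrank_inf_eq x y
  rw [inf_eq_bot_of_finrank_eq_one hx hy hxy, finrank_bot, hx, hy] at this
  omega

theorem sup_eq_of_finrank_eq_one_of_finrank_eq_two {x y S : Submodule K V}
    (hx : finrank K x = 1) (hy : finrank K y = 1) (hxy : x ≠ y) (hxS : x ≤ S) (hyS : y ≤ S)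
    (hS : finrank K S = 2) : x ⊔ y = S := by
  have := FiniteDimensional.of_finrank_eq_succ hS
  exact eq_of_le_of_finrank_eq (sup_le hxS hyS)
    (by rw [finrank_sup_eq_two_of_finrank_eq_one hx hy hxy, hS])

theorem finrank_inf_sup_lt_two (hu : finrank K u = 1) (hv : finrank K v = 1) (huv : u ≠ v)
    (huU : ¬ u ≤ U) : finrank K ↥(U ⊓ (u ⊔ v)) < 2 := by
  have hS := finrank_sup_eq_two_of_finrank_eq_one hu hv huv
  have := FiniteDimensional.of_finrank_eq_succ hS
  rw [← hS]
  exact finrank_lt_finrank_of_lt <| inf_le_right.lt_of_ne fun h ↦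
    huU ((le_sup_left.trans h.ge).trans inf_le_left)

theorem le_of_finrank_inf_sup_eq_one {W : Submodule K V} (hu : finrank K u = 1)
    (hv : finrank K v = 1) (huv : u ≠ v) (huU : ¬ u ≤ U)
    (hL : finrank K ↥(U ⊓ (u ⊔ v)) = 1) (hUW : U ≤ W) (huW : u ≤ W) : v ≤ W := by
  have hLu : U ⊓ (u ⊔ v) ≠ u := fun h ↦ huU (h ▸ inf_le_left)
  have hLuS : U ⊓ (u ⊔ v) ⊔ u = u ⊔ v :=
    sup_eq_of_finrank_eq_one_of_finrank_eq_two hL hu hLu inf_le_right le_sup_left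
      (finrank_sup_eq_two_of_finrank_eq_one hu hv huv)
  calc v ≤ u ⊔ v := le_sup_right
    _ = U ⊓ (u ⊔ v) ⊔ u := hLuS.symm
    _ ≤ W := sup_le (inf_le_left.trans hUW) huW

theorem exists_separating_of_inf_sup_eq_bot [FiniteDimensional K V] (hu : finrank K u = 1)
    (hv : finrank K v = 1) (huv : u ≠ v) (hL : U ⊓ (u ⊔ v) = ⊥) :
    ∃ W : Submodule K V, finrank K W = finrank K U + 1 ∧ U ≤ W ∧ u ≤ W ∧ ¬ v ≤ W := by
  have hUu : U ⊓ u = ⊥ := le_bot_iff.mp (hL ▸ inf_le_inf_left U le_sup_left)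
  have hW : finrank K ↥(U ⊔ u) = finrank K U + 1 := by
    have := finrank_sup_add_finrank_inf_eq U u
    rw [hUu, finrank_bot, hu] at this
    omega
  have hUS : finrank K ↥(U ⊔ (u ⊔ v)) = finrank K U + 2 := by
    have := finrank_sup_add_finrank_inf_eq U (u ⊔ v)
    rw [hL, finrank_bot, finrank_sup_eq_two_of_finrank_eq_one hu hv huv] at this
    omega
  refine ⟨U ⊔ u, hW, le_sup_left, le_sup_right, fun hvW ↦ ?_⟩
  have := finrank_mono (sup_le le_sup_left (sup_le le_sup_right hvW) : U ⊔ (u ⊔ v) ≤ U ⊔ u)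
  omega

end Submodule

theorem stmt_3_general (n : ℕ) (hn : 2 ≤ n)
    (F : Type*) [Field F]
    (V : Type*) [AddCommGroup V] [Module F V] (hV : Module.finrank F V = n)
    (U : Submodule F V) (hU : Module.finrank F U = n - 2)
    (u v : Submodule F V) (hu : Module.finrank F u = 1) (hv : Module.finrank F v = 1)
    (huv : u ≠ v) (huU : ¬ u ≤ U) (hvU : ¬ v ≤ U) :
    (∀ W : Submodule F V, Module.finrank F W = n - 1 → U ≤ W →
        ((u ≤ W ∧ v ≤ W) ∨ (¬ u ≤ W ∧ ¬ v ≤ W))) ↔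
      (Module.finrank F (U ⊓ (u ⊔ v) : Submodule F V) = 1 ∧
        U ⊓ (u ⊔ v) ≠ u ∧ U ⊓ (u ⊔ v) ≠ v) := by
  have : FiniteDimensional F V := Module.finite_of_finrank_pos (by omega)
  constructor
  · intro H
    refine ⟨?_, fun h ↦ huU (h ▸ inf_le_left), fun h ↦ hvU (h ▸ inf_le_left)⟩
    by_contra hL
    have hbot : U ⊓ (u ⊔ v) = ⊥ := by
      have := finrank_inf_sup_lt_two hu hv huv huU
      exact finrank_eq_zero.mp (by omega)
    obtain ⟨W, hW, hUW, huW, hvW⟩ := exists_separating_of_inf_sup_eq_bot hu hv huv hbot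
    rcases H W (by omega) hUW with ⟨-, hvW'⟩ | ⟨huW', -⟩
    exacts [hvW hvW', huW' huW]
  · rintro ⟨hL, -, -⟩ W - hUW
    by_cases huW : u ≤ W
    · exact .inl ⟨huW, le_of_finrank_inf_sup_eq_one hu hv huv huU hL hUW huW⟩
    · rw [sup_comm] at hL
      exact .inr ⟨huW, fun hvW ↦ huW (le_of_finrank_inf_sup_eq_one hv hu huv.symm hvU hL hUW hvW)⟩

/-- For an `(n-2)`-dimensional subspace `U` and distinct `1`-dimensional subspaces
`u, v` not contained in `U`, the hyperplanes through `U` fail to separate `u` and `v`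
iff `U ⊓ ⟨u,v⟩` is a `1`-dimensional subspace different from both `u` and `v`. -/
theorem stmt_3 (q n : ℕ) (hq : ∃ (p k : ℕ), p.Prime ∧ 0 < k ∧ q = p ^ k) (hn : 2 ≤ n)
    (F : Type*) [Field F] [Fintype F] (hF : Fintype.card F = q)
    (V : Type*) [AddCommGroup V] [Module F V] (hV : Module.finrank F V = n)
    (U : Submodule F V) (hU : Module.finrank F U = n - 2)
    (u v : Submodule F V) (hu : Module.finrank F u = 1) (hv : Module.finrank F v = 1)
    (huv : u ≠ v) (huU : ¬ u ≤ U) (hvU : ¬ v ≤ U) :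
    (∀ W : Submodule F V, Module.finrank F W = n - 1 → U ≤ W →
        ((u ≤ W ∧ v ≤ W) ∨ (¬ u ≤ W ∧ ¬ v ≤ W))) ↔
      (Module.finrank F (U ⊓ (u ⊔ v) : Submodule F V) = 1 ∧
        U ⊓ (u ⊔ v) ≠ u ∧ U ⊓ (u ⊔ v) ≠ v) :=
  stmt_3_general n hn F V hV U hU u v hu hv huv huU hvU
end

section
/- Let V be an n-dimensional vector space over GF(q) with n ≥ 4, and let u, v be two distinct 1-dimensional subspaces of V. Then the number of (n−2)-dimensional subspaces U of V such that the family of all (n−1)-dimensional subspaces containing U does not separate u and v equals (q−1)·[n−1 choose n−3]_q − (q−2)·[n−2 choose n−4]_q, where [a choose b]_q denotes the Gaussian binomial coefficient. -/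
/-!
The hyperplanes through `U` fail to separate `u` and `v` exactly when `u ⊔ U = v ⊔ U`, since
every subspace is the intersection of the hyperplanes containing it. For `L = u ⊔ v`, the
modular law turns this into a condition on `U ⊓ L` alone: either `L ≤ U`, or `U ⊓ L` is one of
the `q - 1` points of the projective line `L` other than `u` and `v`. Among the
`(n - 2)`-dimensional `U`, there are `N(L) = [n-2 choose n-4]_q` containing `L`, and for each
point `m` of `L` there are `N(m) - N(L)` with `U ⊓ L = m`, where `N(m) = [n-1 choose n-3]_q`;
both counts come from passing to the quotient. Hence the number is `N(L) + (q - 1)(N(m) - N(L))`.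
-/

/-- The Gaussian binomial coefficient `[a choose b]_q`, realized as the number of
`b`-dimensional subspaces of an `a`-dimensional vector space over the field `F`
(with `|F| = q`). -/
noncomputable def gaussBinom (F : Type*) [Field F] (a b : ℕ) : ℕ :=
  Nat.card {W : Submodule F (Fin a → F) // Module.finrank F W = b}

open Module Submodule

section Cardinality

variable {α β : Type*}

theorem Nat.card_and_add_card_and_not [Finite α] (p q : α → Prop) :
    Nat.card {x // p x ∧ q x} + Nat.card {x // p x ∧ ¬ q x} = Nat.card {x // p x} := by
  have := Set.ncard_inter_add_ncard_sdiff_eq_ncard {x | p x} {x | q x}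
  simp only [← Nat.card_coe_set_eq] at this
  exact this

theorem Nat.card_and_mem_eq_ncard_mul [Finite α] (p : α → Prop) (f : α → β) {S : Set β}
    (hS : S.Finite) {c : ℕ} (hc : ∀ b ∈ S, Nat.card {a // p a ∧ f a = b} = c) :
    Nat.card {a // p a ∧ f a ∈ S} = S.ncard * c := by
  have := hS.fintype
  let e : {a // p a ∧ f a ∈ S} ≃ Σ b : S, {a // p a ∧ f a = b} :=
    { toFun a := ⟨⟨f a, a.2.2⟩, a.1, a.2.1, rfl⟩
      invFun x := ⟨x.2.1, x.2.2.1, by rw [x.2.2.2]; exact x.1.2⟩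
      left_inv _ := rfl
      right_inv x := Sigma.subtype_ext (Subtype.ext x.2.2.2) rfl }
  rw [Nat.card_congr e, Nat.card_sigma, Finset.sum_congr rfl fun b _ => hc b.1 b.2,
    Finset.sum_const, Finset.card_univ, smul_eq_mul, ← Nat.card_eq_fintype_card,
    Nat.card_coe_set_eq]

theorem Nat.card_inf_eq_add_card_le_of_covBy [Lattice α] [Finite α] (p : α → Prop) {m L : α}
    (h : m ⋖ L) :
    Nat.card {x // p x ∧ x ⊓ L = m} + Nat.card {x // p x ∧ L ≤ x} =
      Nat.card {x // p x ∧ m ≤ x} := by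
  rw [← Nat.card_and_add_card_and_not (fun x => p x ∧ m ≤ x) (L ≤ ·), add_comm]
  congr 1
  · refine Nat.card_congr (Equiv.subtypeEquivRight fun x => ?_)
    exact ⟨fun ⟨hp, hLx⟩ => ⟨⟨hp, h.le.trans hLx⟩, hLx⟩,
      fun ⟨⟨hp, _⟩, hLx⟩ => ⟨hp, hLx⟩⟩
  · refine Nat.card_congr (Equiv.subtypeEquivRight fun x =>
      ⟨fun ⟨hp, hx⟩ => ?_, fun ⟨⟨hp, hmx⟩, hLx⟩ => ?_⟩)
    · refine ⟨⟨hp, hx ▸ inf_le_left⟩, fun hLx => h.ne ?_⟩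
      rw [← hx, inf_eq_right.2 hLx]
    · refine ⟨hp, (h.eq_or_eq (le_inf hmx h.le) inf_le_right).resolve_right fun hxL => hLx ?_⟩
      exact hxL ▸ inf_le_left

end Cardinality

theorem sup_eq_sup_iff_sup_inf_eq_sup_inf {α : Type*} [Lattice α] [IsModularLattice α]
    {a b c L : α} (ha : a ≤ L) (hb : b ≤ L) :
    a ⊔ c = b ⊔ c ↔ a ⊔ c ⊓ L = b ⊔ c ⊓ L := by
  constructor
  · intro h
    rw [← sup_inf_assoc_of_le c ha, ← sup_inf_assoc_of_le c hb, h]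
  · intro h
    have hc : c ⊓ L ⊔ c = c := sup_eq_right.2 inf_le_left
    calc a ⊔ c = a ⊔ c ⊓ L ⊔ c := by rw [sup_assoc, hc]
      _ = b ⊔ c ⊓ L ⊔ c := by rw [h]
      _ = b ⊔ c := by rw [sup_assoc, hc]

namespace Submodule

variable {K V : Type*} [Field K] [AddCommGroup V] [Module K V]

theorem ncard_finrank_eq_one_and_le [Finite K] {L : Submodule K V} (hL : finrank K L = 2) :
    {m : Submodule K V | finrank K m = 1 ∧ m ≤ L}.ncard = Nat.card K + 1 := by
  rw [← Projectivization.card_of_finrank_two K L hL, ← Nat.card_coe_set_eq]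
  refine Nat.card_congr ((Projectivization.equivSubmodule K L).trans ?_).symm
  exact ((MapSubtype.orderIso L).toEquiv.subtypeEquiv
    (q := fun m => finrank K m.1 = 1) fun m => by
      rw [← finrank_map_subtype_eq L m]; rfl).trans
    ((Equiv.subtypeSubtypeEquivSubtypeInter (· ≤ L) (fun m => finrank K m = 1)).trans
      (Equiv.subtypeEquivRight fun _ => and_comm))

variable [FiniteDimensional K V]

theorem covBy_of_finrank_eq_add_one {m L : Submodule K V} (hle : m ≤ L)
    (h : finrank K L = finrank K m + 1) : m ⋖ L := by
  refine ⟨lt_of_le_of_ne hle ?_, fun X hmX hXL => ?_⟩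
  · rintro rfl
    omega
  · have := finrank_lt_finrank_of_lt hmX
    have := finrank_lt_finrank_of_lt hXL
    omega

theorem finrank_sup_eq_two {u v : Submodule K V} (hu : finrank K u = 1) (hv : finrank K v = 1)
    (huv : u ≠ v) : finrank K ↥(u ⊔ v) = 2 := by
  have hdisj :=
    (isAtom_iff_finrank_eq_one.2 hu).disjoint_of_ne (isAtom_iff_finrank_eq_one.2 hv) huv
  have := finrank_sup_add_finrank_inf_eq u v
  rw [hdisj.eq_bot, finrank_bot, hu, hv] at this
  omega

theorem sup_eq_sup_iff_of_le_sup {u v m : Submodule K V} (hu : finrank K u = 1)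
    (hv : finrank K v = 1) (huv : u ≠ v) (hm : m ≤ u ⊔ v) :
    u ⊔ m = v ⊔ m ↔ m = u ⊔ v ∨ (finrank K m = 1 ∧ m ≠ u ∧ m ≠ v) := by
  have hL := finrank_sup_eq_two hu hv huv
  constructor
  · intro h
    have huL : u ⊔ m = u ⊔ v :=
      le_antisymm (sup_le le_sup_left hm) (sup_le le_sup_left (h ▸ le_sup_left))
    have hvL : v ⊔ m = u ⊔ v := h ▸ huL
    refine or_iff_not_imp_left.2 fun hmL => ?_
    have h1 := finrank_lt_finrank_of_lt (lt_of_le_of_ne hm hmL)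
    have h2 := finrank_add_le_finrank_add_finrank u m
    rw [huL, hL, hu] at h2
    refine ⟨by omega, ?_, ?_⟩
    · rintro rfl
      rw [sup_idem] at huL
      rw [← huL] at hL
      omega
    · rintro rfl
      rw [sup_idem] at hvL
      rw [← hvL] at hL
      omega
  · rintro (rfl | ⟨hm1, hmu, hmv⟩)
    · rw [sup_eq_right.2 le_sup_left, sup_eq_right.2 le_sup_right]
    · rw [eq_of_le_of_finrank_eq (sup_le le_sup_left hm)
          (by rw [finrank_sup_eq_two hu hm1 hmu.symm, hL]),
        eq_of_le_of_finrank_eq (sup_le le_sup_right hm)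
          (by rw [finrank_sup_eq_two hv hm1 hmv.symm, hL])]

theorem sup_eq_sup_iff_le_or_inf_mem {u v U : Submodule K V} (hu : finrank K u = 1)
    (hv : finrank K v = 1) (huv : u ≠ v) :
    u ⊔ U = v ⊔ U ↔ u ⊔ v ≤ U ∨
      U ⊓ (u ⊔ v) ∈ {m : Submodule K V | finrank K m = 1 ∧ m ≤ u ⊔ v} \ {u, v} := by
  rw [sup_eq_sup_iff_sup_inf_eq_sup_inf le_sup_left le_sup_right,
    sup_eq_sup_iff_of_le_sup hu hv huv inf_le_right, inf_eq_right]
  simp only [Set.mem_sdiff, Set.mem_ofPred_eq, Set.mem_insert_iff, Set.mem_singleton_iff,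
    inf_le_right, and_true, not_or]

theorem exists_hyperplane_ge_notMem {p : Submodule K V} {x : V} (hx : x ∉ p) :
    ∃ W : Submodule K V, finrank K W = finrank K V - 1 ∧ p ≤ W ∧ x ∉ W := by
  obtain ⟨f, hfx, hpf⟩ := p.exists_dual_map_eq_bot_of_notMem hx inferInstance
  have hf : f ≠ 0 := fun h => hfx (by simp [h])
  refine ⟨LinearMap.ker f, ?_, LinearMap.le_ker_iff_map.2 hpf, hfx⟩
  have := Module.Dual.finrank_ker_add_one_of_ne_zero hf
  omega

theorem le_of_forall_hyperplane {p r : Submodule K V}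
    (h : ∀ W : Submodule K V, finrank K W = finrank K V - 1 → p ≤ W → r ≤ W) :
    r ≤ p := by
  intro x hx
  by_contra hxp
  obtain ⟨W, hW, hpW, hxW⟩ := exists_hyperplane_ge_notMem hxp
  exact hxW (h W hW hpW hx)

theorem forall_hyperplane_iff_sup_eq_sup {u v U : Submodule K V} :
    (∀ W : Submodule K V, finrank K W = finrank K V - 1 → U ≤ W → (u ≤ W ↔ v ≤ W)) ↔
      u ⊔ U = v ⊔ U := by
  constructor
  · intro h
    apply le_antisymm
    · refine sup_le (le_of_forall_hyperplane fun W hW hW' => ?_) le_sup_right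
      exact (h W hW (le_sup_right.trans hW')).2 (le_sup_left.trans hW')
    · refine sup_le (le_of_forall_hyperplane fun W hW hW' => ?_) le_sup_right
      exact (h W hW (le_sup_right.trans hW')).1 (le_sup_left.trans hW')
  · intro h W _ hUW
    rw [← sup_le_iff.trans (and_iff_left hUW), h, sup_le_iff, and_iff_left hUW]

theorem card_finrank_eq_eq_gaussBinom {a : ℕ} (hV : finrank K V = a) (b : ℕ) :
    Nat.card {W : Submodule K V // finrank K W = b} = gaussBinom K a b := by
  let e : V ≃ₗ[K] (Fin a → K) := LinearEquiv.ofFinrankEq _ _ (by simpa using hV)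
  exact Nat.card_congr ((orderIsoMapComap e).toEquiv.subtypeEquiv fun W => by
    rw [← e.finrank_map_eq W]; rfl)

theorem finrank_map_mkQ_add_finrank {p W : Submodule K V} (h : p ≤ W) :
    finrank K (W.map p.mkQ) + finrank K p = finrank K W := by
  have h1 := (W.map p.mkQ).finrank_quotient_add_finrank
  have h2 := p.finrank_quotient_add_finrank
  have h3 := W.finrank_quotient_add_finrank
  rw [(quotientQuotientEquivQuotient p W h).finrank_eq] at h1
  omega

theorem card_finrank_eq_and_le_eq_gaussBinom (p : Submodule K V) {b : ℕ}
    (hb : finrank K p ≤ b) :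
    Nat.card {W : Submodule K V // finrank K W = b ∧ p ≤ W} =
      gaussBinom K (finrank K V - finrank K p) (b - finrank K p) := by
  have hq : finrank K (V ⧸ p) = finrank K V - finrank K p := by
    have := p.finrank_quotient_add_finrank
    omega
  rw [← card_finrank_eq_eq_gaussBinom hq]
  refine Nat.card_congr
    { toFun W := ⟨W.1.map p.mkQ, by have := finrank_map_mkQ_add_finrank W.2.2; omega⟩
      invFun W' := ⟨W'.1.comap p.mkQ, ?_, le_comap_mkQ p _⟩
      left_inv W := Subtype.ext ?_
      right_inv W' := Subtype.ext (map_comap_eq_of_surjective p.mkQ_surjective _) }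
  · have := finrank_map_mkQ_add_finrank (le_comap_mkQ p W'.1)
    rw [map_comap_eq_of_surjective p.mkQ_surjective, W'.2] at this
    omega
  · simp [comap_map_mkQ, W.2.2]

theorem card_finrank_eq_and_sup_eq_sup [Finite K] {u v : Submodule K V} (hu : finrank K u = 1)
    (hv : finrank K v = 1) (huv : u ≠ v) {k : ℕ} (hk : 2 ≤ k) :
    (Nat.card {U : Submodule K V // finrank K U = k ∧ u ⊔ U = v ⊔ U} : ℤ) =
      (Nat.card K - 1) * gaussBinom K (finrank K V - 1) (k - 1)
        - (Nat.card K - 2) * gaussBinom K (finrank K V - 2) (k - 2) := by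
  have : Finite V := Module.finite_of_finite K
  set L := u ⊔ v
  set S := {m : Submodule K V | finrank K m = 1 ∧ m ≤ L} \ {u, v}
  set g₁ := gaussBinom K (finrank K V - 1) (k - 1)
  set g₂ := gaussBinom K (finrank K V - 2) (k - 2)
  have hL := finrank_sup_eq_two hu hv huv
  have hq : 1 < Nat.card K := Finite.one_lt_card
  have hS : S.ncard = Nat.card K - 1 := by
    rw [Set.ncard_sdiff (by simp [Set.insert_subset_iff, hu, hv, L]),
      ncard_finrank_eq_one_and_le hL, Set.ncard_pair huv]
    omega
  have hN₂ : Nat.card {U : Submodule K V // finrank K U = k ∧ L ≤ U} = g₂ := by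
    rw [card_finrank_eq_and_le_eq_gaussBinom L (hL ▸ hk), hL]
  have hfib : ∀ m : Submodule K V, finrank K m = 1 → m ≤ L →
      Nat.card {U : Submodule K V // finrank K U = k ∧ U ⊓ L = m} + g₂ = g₁ := by
    intro m hm hmL
    rw [← hN₂, Nat.card_inf_eq_add_card_le_of_covBy _
      (covBy_of_finrank_eq_add_one hmL (by rw [hL, hm])),
      card_finrank_eq_and_le_eq_gaussBinom m (by omega), hm]
  have hsplit : Nat.card {U : Submodule K V // finrank K U = k ∧ u ⊔ U = v ⊔ U} =
      g₂ + S.ncard * (g₁ - g₂) := by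
    rw [← Nat.card_and_add_card_and_not _ (L ≤ ·), ← hN₂,
      ← Nat.card_and_mem_eq_ncard_mul (fun U : Submodule K V => finrank K U = k) (· ⊓ L)
        S.toFinite fun m hm => by have := hfib m hm.1.1 hm.1.2; omega]
    congr 1 <;> refine Nat.card_congr (Equiv.subtypeEquivRight fun U => ?_) <;>
      rw [sup_eq_sup_iff_le_or_inf_mem hu hv huv]
    · exact ⟨fun h => ⟨h.1.1, h.2⟩, fun h => ⟨⟨h.1, Or.inl h.2⟩, h.2⟩⟩
    · refine ⟨fun ⟨⟨hU, h⟩, hLU⟩ => ⟨hU, h.resolve_left hLU⟩,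
        fun ⟨hU, h⟩ => ⟨⟨hU, Or.inr h⟩, ?_⟩⟩
      intro hLU
      have := h.1.1
      rw [inf_eq_right.2 hLU, hL] at this
      omega
  have hg := hfib u hu le_sup_left
  rw [hsplit, hS, ← hg, Nat.add_sub_cancel]
  push_cast [Nat.cast_sub hq.le]
  ring

end Submodule

theorem stmt_4_general (q n : ℕ) (hn : 4 ≤ n)
    (F : Type*) [Field F] [Fintype F] (hF : Fintype.card F = q)
    (V : Type*) [AddCommGroup V] [Module F V] (hV : Module.finrank F V = n)
    (u v : Submodule F V) (hu : Module.finrank F u = 1) (hv : Module.finrank F v = 1)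
    (huv : u ≠ v) :
    (Nat.card {U : Submodule F V // Module.finrank F U = n - 2 ∧
        ∀ W : Submodule F V, Module.finrank F W = n - 1 → U ≤ W →
          ((u ≤ W ∧ v ≤ W) ∨ (¬ u ≤ W ∧ ¬ v ≤ W))} : ℤ) =
      ((q : ℤ) - 1) * (gaussBinom F (n - 1) (n - 3) : ℤ)
        - ((q : ℤ) - 2) * (gaussBinom F (n - 2) (n - 4) : ℤ) := by
  have : FiniteDimensional F V := .of_finrank_pos (by omega)
  have hsep : ∀ U : Submodule F V, (∀ W : Submodule F V, finrank F W = n - 1 → U ≤ W →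
      ((u ≤ W ∧ v ≤ W) ∨ (¬ u ≤ W ∧ ¬ v ≤ W))) ↔ u ⊔ U = v ⊔ U := fun U => by
    simp only [← iff_iff_and_or_not_and_not, ← hV, forall_hyperplane_iff_sup_eq_sup]
  rw [Nat.card_congr (Equiv.subtypeEquivRight fun U => and_congr_right' (hsep U)),
    card_finrank_eq_and_sup_eq_sup hu hv huv (by omega : 2 ≤ n - 2), hV, ← hF,
    Nat.card_eq_fintype_card, show n - 2 - 1 = n - 3 by omega, show n - 2 - 2 = n - 4 by omega]

/-- For distinct `1`-dimensional subspaces `u, v` of an `n`-dimensional space (`n ≥ 4`)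
over `GF(q)`, the number of `(n-2)`-dimensional subspaces `U` such that the hyperplanes
through `U` do not separate `u` and `v` is
`(q-1)·[n-1 choose n-3]_q − (q-2)·[n-2 choose n-4]_q`. -/
theorem stmt_4 (q n : ℕ) (hq : ∃ (p k : ℕ), p.Prime ∧ 0 < k ∧ q = p ^ k) (hn : 4 ≤ n)
    (F : Type*) [Field F] [Fintype F] (hF : Fintype.card F = q)
    (V : Type*) [AddCommGroup V] [Module F V] (hV : Module.finrank F V = n)
    (u v : Submodule F V) (hu : Module.finrank F u = 1) (hv : Module.finrank F v = 1)
    (huv : u ≠ v) :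
    (Nat.card {U : Submodule F V // Module.finrank F U = n - 2 ∧
        ∀ W : Submodule F V, Module.finrank F W = n - 1 → U ≤ W →
          ((u ≤ W ∧ v ≤ W) ∨ (¬ u ≤ W ∧ ¬ v ≤ W))} : ℤ) =
      ((q : ℤ) - 1) * (gaussBinom F (n - 1) (n - 3) : ℤ)
        - ((q : ℤ) - 2) * (gaussBinom F (n - 2) (n - 4) : ℤ) :=
  stmt_4_general q n hn F hF V hV u v hu hv huv
end

section
/- Let π be a finite projective plane of order q and let S be a minimal separating system for the points of π containing a point P. Then there exists exactly one point Q ≠ P such that S \ {P} does not separate the pair (P, Q); and for any line ℓ through P avoiding Q, the set (S \ {P}) ∪ {ℓ} is again a separating system of the same size. -/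
/-!
Two points are left unseparated by a system exactly when they agree on every point and line of
it, so non-separation is an equivalence relation. Removing `p` from a separating system can
therefore only merge `p` with a single other point `Q`, and minimality says that it does merge
with some `Q`. A line through `p` missing `Q` separates that one pair again, and costs one element
of the system, as `p` did.
-/

open Configuration

variable {P L : Type*} [Membership P L]

/-- The system of points `SP` and lines `SL` separates every pair of distinct points:
some line of `SL` contains exactly one of them, or some point of `SP` equals exactly
one of them. -/
def IsSepSystem (SP : Finset P) (SL : Finset L) : Prop :=
  ∀ X Y : P, X ≠ Y →
    (∃ R ∈ SP, (R = X ∧ R ≠ Y) ∨ (R ≠ X ∧ R = Y)) ∨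
    (∃ ℓ ∈ SL, (X ∈ ℓ ∧ Y ∉ ℓ) ∨ (X ∉ ℓ ∧ Y ∈ ℓ))

section Separation

variable {SP : Finset P} {SL : Finset L} {X Y Z p : P}

def Separates (SP : Finset P) (SL : Finset L) (X Y : P) : Prop :=
  (∃ R ∈ SP, (R = X ∧ R ≠ Y) ∨ (R ≠ X ∧ R = Y)) ∨
    (∃ ℓ ∈ SL, (X ∈ ℓ ∧ Y ∉ ℓ) ∨ (X ∉ ℓ ∧ Y ∈ ℓ))

theorem isSepSystem_iff :
    IsSepSystem SP SL ↔ ∀ X Y : P, X ≠ Y → Separates SP SL X Y :=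
  Iff.rfl

theorem not_separates_iff :
    ¬ Separates SP SL X Y ↔ (∀ R ∈ SP, (R = X ↔ R = Y)) ∧ ∀ ℓ ∈ SL, (X ∈ ℓ ↔ Y ∈ ℓ) := by
  simp only [Separates, not_or, not_exists, not_and]
  refine and_congr (forall₂_congr fun _ _ => ?_) (forall₂_congr fun _ _ => ?_) <;> tauto

theorem Separates.symm (h : Separates SP SL X Y) : Separates SP SL Y X := by
  unfold Separates at *
  rcases h with ⟨R, hR, hc⟩ | ⟨ℓ, hℓ, hc⟩
  · exact Or.inl ⟨R, hR, by tauto⟩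
  · exact Or.inr ⟨ℓ, hℓ, by tauto⟩

theorem not_separates_trans (hXY : ¬ Separates SP SL X Y) (hYZ : ¬ Separates SP SL Y Z) :
    ¬ Separates SP SL X Z := by
  rw [not_separates_iff] at *
  exact ⟨fun R hR => (hXY.1 R hR).trans (hYZ.1 R hR),
    fun ℓ hℓ => (hXY.2 ℓ hℓ).trans (hYZ.2 ℓ hℓ)⟩

theorem Separates.mono_lines {SL' : Finset L} (h : Separates SP SL X Y) (hSL : SL ⊆ SL') :
    Separates SP SL' X Y := by
  rcases h with hR | ⟨ℓ, hℓ, hc⟩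
  · exact Or.inl hR
  · exact Or.inr ⟨ℓ, hSL hℓ, hc⟩

theorem separates_of_mem_of_not_mem {ℓ : L} (hℓ : ℓ ∈ SL) (hX : X ∈ ℓ) (hY : Y ∉ ℓ) :
    Separates SP SL X Y :=
  Or.inr ⟨ℓ, hℓ, Or.inl ⟨hX, hY⟩⟩

theorem Separates.erase [DecidableEq P] (h : Separates SP SL X Y) (hX : X ≠ p) (hY : Y ≠ p) :
    Separates (SP.erase p) SL X Y := by
  rcases h with ⟨R, hR, hc⟩ | hl
  · have hRp : R ≠ p := by rcases hc with ⟨rfl, _⟩ | ⟨_, rfl⟩ <;> assumption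
    exact Or.inl ⟨R, Finset.mem_erase.2 ⟨hRp, hR⟩, hc⟩
  · exact Or.inr hl

theorem eq_of_not_separates_erase [DecidableEq P] (hsep : IsSepSystem SP SL) (hX : X ≠ p)
    (hY : Y ≠ p) (h : ¬ Separates (SP.erase p) SL X Y) : X = Y := by
  by_contra hXY
  exact h (Separates.erase (hsep X Y hXY) hX hY)

theorem eq_or_eq_of_not_separates_erase [DecidableEq P] (hsep : IsSepSystem SP SL)
    (hXY : X ≠ Y) (h : ¬ Separates (SP.erase p) SL X Y) : X = p ∨ Y = p := by
  by_contra! hne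
  exact hXY (eq_of_not_separates_erase hsep hne.1 hne.2 h)

theorem eq_of_not_separates_erase_of_not_separates_erase [DecidableEq P]
    (hsep : IsSepSystem SP SL) (hX : X ≠ p) (hY : Y ≠ p)
    (hpX : ¬ Separates (SP.erase p) SL p X) (hpY : ¬ Separates (SP.erase p) SL p Y) : X = Y :=
  eq_of_not_separates_erase hsep hX hY (not_separates_trans (mt Separates.symm hpX) hpY)

theorem exists_not_separates_erase [DecidableEq P] (hsep : IsSepSystem SP SL)
    (hmin : ¬ IsSepSystem (SP.erase p) SL) : ∃ Q, Q ≠ p ∧ ¬ Separates (SP.erase p) SL p Q := by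
  simp only [isSepSystem_iff, not_forall] at hmin
  obtain ⟨X, Y, hXY, h⟩ := hmin
  rcases eq_or_eq_of_not_separates_erase hsep hXY h with rfl | rfl
  · exact ⟨Y, hXY.symm, h⟩
  · exact ⟨X, hXY, mt Separates.symm h⟩

theorem isSepSystem_erase_insert [DecidableEq P] [DecidableEq L] (hsep : IsSepSystem SP SL)
    {Q : P} (hQ : Q ≠ p) (hpQ : ¬ Separates (SP.erase p) SL p Q) {ℓ : L} (hpℓ : p ∈ ℓ)
    (hQℓ : Q ∉ ℓ) : IsSepSystem (SP.erase p) (insert ℓ SL) := by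
  have hpartner : ∀ {Y}, Y ≠ p → ¬ Separates (SP.erase p) SL p Y → Y = Q := fun hY hpY =>
    eq_of_not_separates_erase_of_not_separates_erase hsep hY hQ hpY hpQ
  have hℓ : Separates (SP.erase p) (insert ℓ SL) p Q :=
    separates_of_mem_of_not_mem (Finset.mem_insert_self ℓ SL) hpℓ hQℓ
  intro X Y hXY
  by_cases hold : Separates (SP.erase p) SL X Y
  · exact hold.mono_lines (Finset.subset_insert ℓ SL)
  rcases eq_or_eq_of_not_separates_erase hsep hXY hold with rfl | rfl
  · rwa [hpartner (Ne.symm hXY) hold]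
  · rw [hpartner hXY (mt Separates.symm hold)]
    exact hℓ.symm

end Separation

theorem stmt_14_general [DecidableEq P] [DecidableEq L]
    (SP : Finset P) (SL : Finset L) (hsep : IsSepSystem (L := L) SP SL)
    (hmin : ∀ SP' : Finset P, ∀ SL' : Finset L, SP' ⊆ SP → SL' ⊆ SL →
      (SP' ≠ SP ∨ SL' ≠ SL) → ¬ IsSepSystem (L := L) SP' SL')
    (p : P) (hp : p ∈ SP) :
    (∃! Q : P, Q ≠ p ∧ ¬ (∃ R ∈ SP.erase p, (R = p ∧ R ≠ Q) ∨ (R ≠ p ∧ R = Q)) ∧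
       ¬ (∃ ℓ ∈ SL, (p ∈ ℓ ∧ Q ∉ ℓ) ∨ (p ∉ ℓ ∧ Q ∈ ℓ))) ∧
    (∀ Q : P, (Q ≠ p ∧ ¬ (∃ R ∈ SP.erase p, (R = p ∧ R ≠ Q) ∨ (R ≠ p ∧ R = Q)) ∧
       ¬ (∃ ℓ ∈ SL, (p ∈ ℓ ∧ Q ∉ ℓ) ∨ (p ∉ ℓ ∧ Q ∈ ℓ))) →
      ∀ ℓ : L, p ∈ ℓ → Q ∉ ℓ →
        IsSepSystem (SP.erase p) (insert ℓ SL) ∧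
        (SP.erase p).card + (insert ℓ SL).card = SP.card + SL.card) := by
  have hpartner : ∀ Q : P, (Q ≠ p ∧ ¬ (∃ R ∈ SP.erase p, (R = p ∧ R ≠ Q) ∨ (R ≠ p ∧ R = Q)) ∧
      ¬ (∃ ℓ ∈ SL, (p ∈ ℓ ∧ Q ∉ ℓ) ∨ (p ∉ ℓ ∧ Q ∈ ℓ))) ↔
      Q ≠ p ∧ ¬ Separates (SP.erase p) SL p Q :=
    fun _ => and_congr_right' not_or.symm
  simp only [hpartner]
  have herase : ¬ IsSepSystem (SP.erase p) SL :=
    hmin _ _ (Finset.erase_subset p SP) subset_rfl (Or.inl (Finset.erase_ne_self.2 hp))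
  obtain ⟨Q, hQ⟩ := exists_not_separates_erase hsep herase
  refine ⟨⟨Q, hQ, fun Y hY =>
    eq_of_not_separates_erase_of_not_separates_erase hsep hY.1 hQ.1 hY.2 hQ.2⟩, ?_⟩
  rintro Q ⟨hQp, hpQ⟩ ℓ hpℓ hQℓ
  have hℓSL : ℓ ∉ SL := fun hℓ => hpQ (separates_of_mem_of_not_mem hℓ hpℓ hQℓ)
  refine ⟨isSepSystem_erase_insert hsep hQp hpQ hpℓ hQℓ, ?_⟩
  rw [Finset.card_erase_of_mem hp, Finset.card_insert_of_notMem hℓSL]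
  have := Finset.card_pos.2 ⟨p, hp⟩
  omega

/-- If `S` is a minimal separating system of a finite projective plane containing a point `p`,
then there is exactly one point `Q ≠ p` not separated from `p` by `S \ {p}`, and replacing `p`
by any line through `p` avoiding `Q` yields a separating system of the same size. -/
theorem stmt_14 [ProjectivePlane P L] [Fintype P] [Fintype L] [DecidableEq P] [DecidableEq L]
    (SP : Finset P) (SL : Finset L) (hsep : IsSepSystem (L := L) SP SL)
    (hmin : ∀ SP' : Finset P, ∀ SL' : Finset L, SP' ⊆ SP → SL' ⊆ SL →
      (SP' ≠ SP ∨ SL' ≠ SL) → ¬ IsSepSystem (L := L) SP' SL')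
    (p : P) (hp : p ∈ SP) :
    (∃! Q : P, Q ≠ p ∧ ¬ (∃ R ∈ SP.erase p, (R = p ∧ R ≠ Q) ∨ (R ≠ p ∧ R = Q)) ∧
       ¬ (∃ ℓ ∈ SL, (p ∈ ℓ ∧ Q ∉ ℓ) ∨ (p ∉ ℓ ∧ Q ∈ ℓ))) ∧
    (∀ Q : P, (Q ≠ p ∧ ¬ (∃ R ∈ SP.erase p, (R = p ∧ R ≠ Q) ∨ (R ≠ p ∧ R = Q)) ∧
       ¬ (∃ ℓ ∈ SL, (p ∈ ℓ ∧ Q ∉ ℓ) ∨ (p ∉ ℓ ∧ Q ∈ ℓ))) →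
      ∀ ℓ : L, p ∈ ℓ → Q ∉ ℓ →
        IsSepSystem (SP.erase p) (insert ℓ SL) ∧
        (SP.erase p).card + (insert ℓ SL).card = SP.card + SL.card) :=
  stmt_14_general SP SL hsep hmin p hp
end
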